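/- Let ν ≥ 1 be an integer and let λ, γ, μ be real numbers. Define ι₂ : ℝ^ν → E, where E = EuclideanSpace ℝ (Fin ν × Fin 3), by ι₂(t)(i, 0) = λ·tᵢ, ι₂(t)(i, 1) = γ·cos(μ·tᵢ), ι₂(t)(i, 2) = γ·sin(μ·tᵢ). Then for every t ∈ ℝ^ν and every v ∈ ℝ^ν, ‖(iteratedFDeriv ℝ 2 ι₂ t)(v, v)‖² = γ²·μ⁴·∑_{i} vᵢ⁴. -/

import Mathlib

/-!
Each coordinate `(i, j)` of `ι₂(t)` is `hⱼ(tᵢ)` for the helix `h(s) = (λs, γ cos μs, γ sin μs)`,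
so `D²ι₂(t)[v, v]` has coordinates `hⱼ''(tᵢ) vᵢ²`. The helix has acceleration of constant norm
`|h''| = γμ²`, and summing over `i` gives `γ²μ⁴ ∑ᵢ vᵢ⁴`.
-/

open scoped BigOperators

/-- The coiling map `ι₂ : ℝ^ν → ℝ^{ν×3}`,
`t ↦ (λ tᵢ, γ cos(μ tᵢ), γ sin(μ tᵢ))_{i}`. -/
noncomputable def coilingMap (ν : ℕ) (l γ μ : ℝ) (t : EuclideanSpace ℝ (Fin ν)) :
    EuclideanSpace ℝ (Fin ν × Fin 3) :=
  (WithLp.equiv 2 (Fin ν × Fin 3 → ℝ)).symm fun p =>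
    ![l * t p.1, γ * Real.cos (μ * t p.1), γ * Real.sin (μ * t p.1)] p.2

open Real Finset

theorem iteratedFDeriv_apply_eq_iteratedDeriv_mul_prod_of_apply_eq
    {ι κ : Type*} [Fintype ι] [Fintype κ] {n : ℕ} (σ : κ → ι) {h : κ → ℝ → ℝ}
    (hh : ∀ k, ContDiff ℝ n (h k)) {F : EuclideanSpace ℝ ι → EuclideanSpace ℝ κ}
    (hF : ∀ t k, F t k = h k (t (σ k))) (t : EuclideanSpace ℝ ι)
    (m : Fin n → EuclideanSpace ℝ ι) (k : κ) :
    iteratedFDeriv ℝ n F t m k = iteratedDeriv n (h k) (t (σ k)) * ∏ j, m j (σ k) := by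
  have hF' : ∀ k, EuclideanSpace.proj k ∘ F = h k ∘ EuclideanSpace.proj (σ k) :=
    fun k ↦ funext fun t ↦ hF t k
  have hFsmooth : ContDiff ℝ n F := contDiff_euclidean.2 fun k ↦
    (hF' k ▸ (hh k).comp (EuclideanSpace.proj (𝕜 := ℝ) (σ k)).contDiff :
      ContDiff ℝ n (EuclideanSpace.proj k ∘ F))
  calc iteratedFDeriv ℝ n F t m k
      = iteratedFDeriv ℝ n (EuclideanSpace.proj k ∘ F) t m := by
        rw [ContinuousLinearMap.iteratedFDeriv_comp_left _ hFsmooth.contDiffAt le_rfl]; rfl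
    _ = iteratedFDeriv ℝ n (h k) (t (σ k)) fun j ↦ m j (σ k) := by
        rw [hF', ContinuousLinearMap.iteratedFDeriv_comp_right _ (hh k) t le_rfl]; rfl
    _ = _ := by rw [iteratedFDeriv_apply_eq_iteratedDeriv_mul_prod, smul_eq_mul, mul_comm]

noncomputable def helix (l γ μ : ℝ) (j : Fin 3) (s : ℝ) : ℝ :=
  ![l * s, γ * cos (μ * s), γ * sin (μ * s)] j

theorem contDiff_helix (l γ μ : ℝ) (j : Fin 3) {n : WithTop ℕ∞} :
    ContDiff ℝ n (helix l γ μ j) := by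
  unfold helix
  fin_cases j <;> simp <;> fun_prop

theorem iteratedDeriv_two_cos_const_mul (μ : ℝ) :
    iteratedDeriv 2 (fun s ↦ cos (μ * s)) = fun s ↦ -(μ ^ 2 * cos (μ * s)) := by
  rw [iteratedDeriv_comp_const_mul contDiff_cos]
  simp [iteratedDeriv_even_cos 1]

theorem iteratedDeriv_two_sin_const_mul (μ : ℝ) :
    iteratedDeriv 2 (fun s ↦ sin (μ * s)) = fun s ↦ -(μ ^ 2 * sin (μ * s)) := by
  rw [iteratedDeriv_comp_const_mul contDiff_sin]
  simp [iteratedDeriv_even_sin 1]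

theorem sum_sq_iteratedDeriv_two_helix (l γ μ s : ℝ) :
    ∑ j, iteratedDeriv 2 (helix l γ μ j) s ^ 2 = γ ^ 2 * μ ^ 4 := by
  unfold helix
  simp only [Fin.sum_univ_three, Matrix.cons_val_zero, Matrix.cons_val_one,
    Matrix.cons_val_two, Matrix.head_cons, Matrix.tail_cons, iteratedDeriv_const_mul_field,
    iteratedDeriv_const_mul_field l (fun s ↦ s), iteratedDeriv_fun_id, OfNat.ofNat_ne_zero,
    OfNat.ofNat_ne_one, if_false, iteratedDeriv_two_cos_const_mul,
    iteratedDeriv_two_sin_const_mul]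
  linear_combination γ ^ 2 * μ ^ 4 * sin_sq_add_cos_sq (μ * s)

theorem coilingMap_second_derivative_sq_general (ν : ℕ) (l γ μ : ℝ)
    (t v : EuclideanSpace ℝ (Fin ν)) :
    ‖(iteratedFDeriv ℝ 2 (coilingMap ν l γ μ) t) ![v, v]‖ ^ 2 =
      γ ^ 2 * μ ^ 4 * ∑ i : Fin ν, (v i) ^ 4 := by
  have hD2 := iteratedFDeriv_apply_eq_iteratedDeriv_mul_prod_of_apply_eq Prod.fst
    (fun p ↦ contDiff_helix l γ μ p.2) (F := coilingMap ν l γ μ) (fun _ _ ↦ rfl) t ![v, v]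
  rw [EuclideanSpace.norm_sq_eq, Fintype.sum_prod_type, mul_sum]
  refine sum_congr rfl fun i _ ↦ ?_
  simp only [hD2, Fin.prod_univ_two, Matrix.cons_val_zero, Matrix.cons_val_one,
    Real.norm_eq_abs, sq_abs, mul_pow, ← sum_mul, sum_sq_iteratedDeriv_two_helix]
  ring

/-- The diagonal of the second fundamental form of the coiling map:
`‖D²ι₂(t)[v,v]‖² = γ²μ⁴ ∑ᵢ vᵢ⁴`. -/
theorem coilingMap_second_derivative_sq (ν : ℕ) (hν : 1 ≤ ν) (l γ μ : ℝ)
    (t v : EuclideanSpace ℝ (Fin ν)) :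
    ‖(iteratedFDeriv ℝ 2 (coilingMap ν l γ μ) t) ![v, v]‖ ^ 2 =
      γ ^ 2 * μ ^ 4 * ∑ i : Fin ν, (v i) ^ 4 :=
  coilingMap_second_derivative_sq_general ν l γ μ t v
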